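/- Let η ∈ ℝ and let Q ∈ Sym₀(3) satisfy J(Q,η) < +∞. Then J(Q,η) ≥ ψ_s(Q) − ln(|Q|² − η), where ψ_s(Q) = inf_{f ∈ A(Q)} ∫_{S²} f(p) ln f(p) dp is the Ball–Majumdar singular potential. In particular, J(·,η) blows up to +∞ uniformly at the boundary of its domain { Q ∈ Sym₀(3) : v_min(Q) > −1/3, |Q|² > η }. -/

import Mathlib

/-
Common setting for the formalisation of
"An analysis of equilibria in dense nematic liquid crystals" (J. M. Taylor).

* `V3` is ℝ³ (as a Euclidean space), `sph` is the unit sphere S²,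
  and `μS` is the 2-dimensional Hausdorff (surface) measure restricted to S².
* `IsProb f` says `f ∈ P(S²)`.
* `FE f η` is the free energy `F(f,η) ∈ ℝ ∪ {+∞}` (realised as `EReal`),
  with the conventions `0 ln 0 = 0`, `0 ⬝ (+∞) = 0` and `-ln x = +∞` for `x ≤ 0`:
  the value is the real integral whenever the argument of the logarithm is a.e.
  positive on `{f ≠ 0}` and the integrand is integrable, and `+∞` otherwise.
-/

open MeasureTheory Matrix Filter
open scoped ENNReal Topology Classical

noncomputable section

abbrev V3 : Type := EuclideanSpace ℝ (Fin 3)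

/-- The unit sphere S² in ℝ³. -/
def sph : Set V3 := Metric.sphere (0 : V3) 1

/-- The 2-dimensional Hausdorff (surface) measure on S². -/
def μS : Measure V3 := (μH[2]).restrict sph

abbrev Mat3 : Type := Matrix (Fin 3) (Fin 3) ℝ

/-- Membership in Sym₀(3): real symmetric traceless 3×3 matrices. -/
def Sym0 (Q : Mat3) : Prop := Q.IsSymm ∧ Q.trace = 0

/-- The Frobenius inner product `A·B = trace (A*B)` (on symmetric matrices). -/
def mdot (A B : Mat3) : ℝ := (A * B).trace

/-- The quadratic form `p ↦ Qp·p`. -/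
def qf (Q : Mat3) (p : V3) : ℝ := ∑ i, ∑ j, Q i j * p i * p j

/-- The smallest eigenvalue of a symmetric matrix, via Rayleigh quotients on S². -/
def vmin (Q : Mat3) : ℝ := ⨅ p : sph, qf Q (p : V3)

/-- `f ∈ P(S²)`. -/
def IsProb (f : V3 → ℝ) : Prop :=
  Integrable f μS ∧ (∀ᵐ p ∂μS, 0 ≤ f p) ∧ ∫ p, f p ∂μS = 1

/-- The interaction term `p ↦ ∫_{S²} ((p·q)² − 1/3) f(q) dq`. -/
def Kf (f : V3 → ℝ) (p : V3) : ℝ :=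
  ∫ q, ((∑ i, p i * q i) ^ 2 - 1 / 3) * f q ∂μS

/-- The free energy `F(f,η) ∈ ℝ ∪ {+∞}`. -/
def FE (f : V3 → ℝ) (η : ℝ) : EReal :=
  if (∀ᵐ p ∂μS, f p ≠ 0 → η < Kf f p) ∧
      Integrable (fun p => f p * Real.log (f p) - f p * Real.log (Kf f p - η)) μS
  then ((∫ p, f p * Real.log (f p) - f p * Real.log (Kf f p - η) ∂μS : ℝ) : EReal)
  else ⊤

/-- The Q-tensor `Q(f) = ∫_{S²} (p⊗p − (1/3)I) f(p) dp`. -/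
def Qten (f : V3 → ℝ) : Mat3 :=
  Matrix.of fun i j => ∫ p, f p * (p i * p j - if i = j then (1 : ℝ) / 3 else 0) ∂μS

/-- The macroscopic energy `J(Q,η) = inf_{f ∈ A(Q)} F(f,η)` (`= +∞` when `A(Q) = ∅`). -/
def Jfun (Q : Mat3) (η : ℝ) : EReal :=
  sInf {y : EReal | ∃ f : V3 → ℝ, IsProb f ∧ Qten f = Q ∧ FE f η = y}

/-- The dual objective `D(Q,λ,η) = λ·Q − ln ∫_{S²} exp(λp·p) max(Qp·p − η, 0) dp`. -/
def Dob (Q lam : Mat3) (η : ℝ) : ℝ :=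
  mdot lam Q - Real.log (∫ p, Real.exp (qf lam p) * max (qf Q p - η) 0 ∂μS)

/-- The effective domain of `J(·,η)`. -/
def domJ (η : ℝ) : Set Mat3 :=
  {Q : Mat3 | Sym0 Q ∧ -(1/3) < vmin Q ∧ η < mdot Q Q}

/-- The matrix `∫_{S²} (f(p)/(Qp·p − η)) (p⊗p − (1/3)I) dp` (integrand `0` where `f` vanishes,
by the junk-value conventions of division in Lean). -/
def Mmat (f : V3 → ℝ) (Q : Mat3) (η : ℝ) : Mat3 :=
  Matrix.of fun i j =>
    ∫ p, f p / (qf Q p - η) * (p i * p j - if i = j then (1 : ℝ) / 3 else 0) ∂μS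

/-- The entropy `∫_{S²} f ln f ∈ ℝ ∪ {+∞}`. -/
def EntE (f : V3 → ℝ) : EReal :=
  if Integrable (fun p => f p * Real.log (f p)) μS
  then ((∫ p, f p * Real.log (f p) ∂μS : ℝ) : EReal)
  else ⊤

/-- The Ball–Majumdar singular potential `ψ_s(Q) = inf_{f ∈ A(Q)} ∫ f ln f`. -/
def psiS (Q : Mat3) : EReal :=
  sInf {y : EReal | ∃ f : V3 → ℝ, IsProb f ∧ Qten f = Q ∧ EntE f = y}

/-- `f` is an `L^p`-local minimiser of `F(·,η)`. -/
def LpLocMin (pp : ℝ≥0∞) (η : ℝ) (f : V3 → ℝ) : Prop :=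
  FE f η < ⊤ ∧ ∃ ε : ℝ, 0 < ε ∧ ∀ g : V3 → ℝ, IsProb g →
    eLpNorm (g - f) pp μS < ENNReal.ofReal ε → FE f η ≤ FE g η

/-!
Gibbs' inequality `ln k ≤ ln c + k / c - 1`, taken at `k = K_f(p) - η` and `c = |Q|² - η` and
integrated against `f`, gives `∫ f ln f ≤ F(f, η) + ln (|Q|² - η)` because `K_f(p) = Qp·p` on the
sphere and hence `∫ f K_f = |Q|²`; the first claim follows by taking infima over `f`.

Near the part `|Q|² = η` of the boundary, `-ln (|Q|² - η)` blows up while `∫ f ln f ≥ 1 - |S²|`.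
Near the part `v_min(Q) = -1/3` there is a unit `u` with `∫ f (u·p)² = Qu·u + 1/3` small, so by
Chebyshev most of the mass of `f` lies in a strip `|u·p| ≤ t`. In latitude–longitude coordinates
the strip is the Lipschitz image of a rectangle of area `O(t)`, so Jensen's inequality on the strip
forces `∫ f ln f ≥ ½ ln (1/t) - O(1)`; and `|Q|² = ∫ f K_f ≤ 2/3` keeps `ln (|Q|² - η)` bounded.
-/

open Real
open scoped RealInnerProductSpace

lemma mul_log_add_one_sub_le_mul_log {x c : ℝ} (hx : 0 ≤ x) (hc : 0 < c) :
    x * (log c + 1) - c ≤ x * log x := by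
  rcases hx.eq_or_lt with rfl | hx
  · simpa using hc.le
  · have h := log_le_sub_one_of_pos (div_pos hc hx)
    rw [log_div hc.ne' hx.ne'] at h
    have h' := mul_le_mul_of_nonneg_left h hx.le
    have hxc : x * (c / x - 1) = c - x := by field_simp
    linarith

lemma mul_log_le_mul_div_add {x k c : ℝ} (hx : 0 ≤ x) (hk : 0 < k) (hc : 0 < c) :
    x * log k ≤ x * k / c + x * (log c - 1) := by
  have h := log_le_sub_one_of_pos (div_pos hk hc)
  rw [log_div hk.ne' hc.ne'] at h
  have := mul_le_mul_of_nonneg_left h hx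
  rw [mul_div_assoc]
  linarith

section Entropy

variable {α : Type*} [MeasurableSpace α] {μ : Measure α} {f : α → ℝ}

lemma sq_mul_setIntegral_compl_le {g : α → ℝ} (hg : Measurable g) (hf0 : 0 ≤ᵐ[μ] f)
    (hf : Integrable f μ) (hfg : Integrable (fun x => f x * g x ^ 2) μ) {t : ℝ} (ht : 0 ≤ t) :
    t ^ 2 * ∫ x in {x | |g x| ≤ t}ᶜ, f x ∂μ ≤ ∫ x, f x * g x ^ 2 ∂μ := by
  rw [← integral_const_mul]
  refine (integral_mono_ae (hf.integrableOn.const_mul _) hfg.integrableOn ?_).trans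
    (setIntegral_le_integral hfg <| by
      filter_upwards [hf0] with x hx using mul_nonneg hx (sq_nonneg _))
  filter_upwards [ae_restrict_of_ae hf0,
    ae_restrict_mem (measurableSet_le hg.abs measurable_const).compl] with x hx hxt
  have hgt : t < |g x| := not_le.1 hxt
  have : t ^ 2 ≤ g x ^ 2 := by nlinarith [sq_abs (g x)]
  exact (mul_le_mul_of_nonneg_right this hx).trans_eq (mul_comm _ _)

variable [IsFiniteMeasure μ]

lemma mul_log_add_one_sub_le_integral_mul_log (hf0 : 0 ≤ᵐ[μ] f) (hf : Integrable f μ)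
    (hflog : Integrable (fun x => f x * log (f x)) μ) {c : ℝ} (hc : 0 < c) :
    (∫ x, f x ∂μ) * (log c + 1) - c * μ.real Set.univ ≤ ∫ x, f x * log (f x) ∂μ := by
  have h := integral_mono_ae (f := fun x => f x * (log c + 1) - c)
    ((hf.mul_const (log c + 1)).sub (integrable_const c)) hflog
    (by filter_upwards [hf0] with x hx using mul_log_add_one_sub_le_mul_log hx hc)
  rwa [integral_sub (hf.mul_const _) (integrable_const c), integral_mul_const, integral_const,
    smul_eq_mul, mul_comm (μ.real _)] at h

lemma integral_sub_measureReal_le_integral_mul_log (hf0 : 0 ≤ᵐ[μ] f) (hf : Integrable f μ)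
    (hflog : Integrable (fun x => f x * log (f x)) μ) :
    ∫ x, f x ∂μ - μ.real Set.univ ≤ ∫ x, f x * log (f x) ∂μ := by
  simpa using mul_log_add_one_sub_le_integral_mul_log hf0 hf hflog one_pos

lemma integral_mul_log_div_le_integral_mul_log (hf0 : 0 ≤ᵐ[μ] f) (hf : Integrable f μ)
    (hflog : Integrable (fun x => f x * log (f x)) μ) (hpos : 0 < ∫ x, f x ∂μ) :
    (∫ x, f x ∂μ) * log ((∫ x, f x ∂μ) / μ.real Set.univ) ≤ ∫ x, f x * log (f x) ∂μ := by
  have hμ : 0 < μ.real Set.univ := by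
    have : NeZero μ := ⟨by rintro rfl; simp at hpos⟩
    exact measureReal_univ_pos
  have h := mul_log_add_one_sub_le_integral_mul_log hf0 hf hflog (div_pos hpos hμ)
  rw [div_mul_cancel₀ _ hμ.ne'] at h
  linarith

lemma neg_log_div_two_sub_le_integral_mul_log (hf0 : 0 ≤ᵐ[μ] f) (hf : Integrable f μ)
    (hflog : Integrable (fun x => f x * log (f x)) μ) (hf1 : ∫ x, f x ∂μ = 1) {A : Set α}
    (hA : MeasurableSet A) (hmass : ∫ x in Aᶜ, f x ∂μ ≤ 1 / 2) {ε : ℝ} (hAε : μ.real A ≤ ε)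
    (hε : ε ≤ 1) :
    -log ε / 2 - 1 / 2 - μ.real Set.univ ≤ ∫ x, f x * log (f x) ∂μ := by
  set m := ∫ x in A, f x ∂μ
  have hm : m + ∫ x in Aᶜ, f x ∂μ = 1 := by rw [integral_add_compl hA hf, hf1]
  have hm_half : 1 / 2 ≤ m := by linarith
  have hμA : 0 < μ.real A := by
    refine measureReal_nonneg.lt_of_ne fun h => ?_
    have : m = 0 := setIntegral_measure_zero _ ((measureReal_eq_zero_iff).1 h.symm)
    linarith
  have hin : m * log (m / μ.real A) ≤ ∫ x in A, f x * log (f x) ∂μ := by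
    simpa using integral_mul_log_div_le_integral_mul_log (μ := μ.restrict A)
      (ae_restrict_of_ae hf0) hf.integrableOn hflog.integrableOn (by linarith)
  have hout : ∫ x in Aᶜ, f x ∂μ - μ.real Aᶜ ≤ ∫ x in Aᶜ, f x * log (f x) ∂μ := by
    simpa using integral_sub_measureReal_le_integral_mul_log (μ := μ.restrict Aᶜ)
      (ae_restrict_of_ae hf0) hf.integrableOn hflog.integrableOn
  have hAc : 0 ≤ ∫ x in Aᶜ, f x ∂μ := integral_nonneg_of_ae (ae_restrict_of_ae hf0)
  have hμAc : μ.real Aᶜ ≤ μ.real Set.univ := measureReal_mono (Set.subset_univ _)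
  have hmlogm := self_sub_one_le_mul_log (x := m) (by linarith)
  have hlogA : log (μ.real A) ≤ log ε := log_le_log hμA hAε
  have hlogε : log ε ≤ 0 := log_nonpos (hμA.le.trans hAε) hε
  rw [log_div (by linarith) hμA.ne'] at hin
  rw [← integral_add_compl hA hflog]
  nlinarith

end Entropy

section LatitudeLongitude

variable {E : Type*} [NormedAddCommGroup E] [InnerProductSpace ℝ E]

lemma abs_mul_sub_mul_le {a a' b b' : ℝ} (hb : |b| ≤ 1) (ha' : |a'| ≤ 1) :
    |a * b - a' * b'| ≤ |a - a'| + |b - b'| :=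
  calc |a * b - a' * b'| = |(a - a') * b + a' * (b - b')| := by ring_nf
    _ ≤ |a - a'| * |b| + |a'| * |b - b'| := by rw [← abs_mul, ← abs_mul]; exact abs_add_le _ _
    _ ≤ |a - a'| + |b - b'| := by
      gcongr
      · exact mul_le_of_le_one_right (abs_nonneg _) hb
      · exact mul_le_of_le_one_left (abs_nonneg _) ha'

/-- Longitude `x 0` and latitude `x 1` on the unit sphere, with polar axis `b 0`. -/
noncomputable def latLon (b : OrthonormalBasis (Fin 3) ℝ E) (x : Fin 2 → ℝ) : E :=
  (cos (x 1) * cos (x 0)) • b 1 + (cos (x 1) * sin (x 0)) • b 2 + sin (x 1) • b 0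

lemma lipschitzWith_latLon (b : OrthonormalBasis (Fin 3) ℝ E) : LipschitzWith 5 (latLon b) := by
  refine LipschitzWith.of_dist_le_mul fun x y => ?_
  have h0 : |x 0 - y 0| ≤ dist x y := by simpa [Real.dist_eq] using dist_le_pi_dist x y 0
  have h1 : |x 1 - y 1| ≤ dist x y := by simpa [Real.dist_eq] using dist_le_pi_dist x y 1
  have hc := abs_mul_sub_mul_le (a := cos (x 1)) (b' := cos (y 0))
    (abs_cos_le_one (x 0)) (abs_cos_le_one (y 1))
  have hs := abs_mul_sub_mul_le (a := cos (x 1)) (b' := sin (y 0))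
    (abs_sin_le_one (x 0)) (abs_cos_le_one (y 1))
  have hunit : ∀ i, ‖b i‖ = 1 := fun i => b.orthonormal.1 i
  calc dist (latLon b x) (latLon b y)
      = ‖(cos (x 1) * cos (x 0) - cos (y 1) * cos (y 0)) • b 1
          + (cos (x 1) * sin (x 0) - cos (y 1) * sin (y 0)) • b 2
          + (sin (x 1) - sin (y 1)) • b 0‖ := by
        rw [dist_eq_norm, latLon, latLon]; congr 1; module
    _ ≤ |cos (x 1) * cos (x 0) - cos (y 1) * cos (y 0)|
          + |cos (x 1) * sin (x 0) - cos (y 1) * sin (y 0)| + |sin (x 1) - sin (y 1)| := by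
        refine (norm_add₃_le ..).trans ?_
        simp only [norm_smul, hunit, mul_one, Real.norm_eq_abs, le_refl]
    _ ≤ 5 * dist x y := by
        have := abs_cos_sub_cos_le (x 1) (y 1)
        have := abs_cos_sub_cos_le (x 0) (y 0)
        have := abs_sin_sub_sin_le (x 0) (y 0)
        have := abs_sin_sub_sin_le (x 1) (y 1)
        linarith

lemma arcsin_le_pi_div_two_mul {t : ℝ} (ht : 0 ≤ t) : arcsin t ≤ π / 2 * t := by
  rcases le_total t 1 with ht1 | ht1
  · have hs := mul_le_sin (arcsin_nonneg.2 ht) (arcsin_le_pi_div_two t)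
    rw [sin_arcsin (by linarith) ht1] at hs
    have := pi_pos
    field_simp at hs ⊢
    linarith
  · rw [arcsin_of_one_le ht1]
    nlinarith [pi_pos]

lemma latLon_arg_arcsin {b : OrthonormalBasis (Fin 3) ℝ E} {p : E} (hp : ‖p‖ = 1) :
    latLon b ![Complex.arg ⟨⟪b 1, p⟫, ⟪b 2, p⟫⟩, arcsin ⟪b 0, p⟫] = p := by
  set z : ℂ := ⟨⟪b 1, p⟫, ⟪b 2, p⟫⟩
  have hsq : ∑ i, ⟪b i, p⟫ ^ 2 = 1 := by rw [b.sum_sq_inner_right, hp, one_pow]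
  rw [Fin.sum_univ_three] at hsq
  have hz : cos (arcsin ⟪b 0, p⟫) = ‖z‖ := by
    rw [cos_arcsin, Complex.norm_def, Complex.normSq_mk]
    congr 1
    linarith
  have h0 : |⟪b 0, p⟫| ≤ 1 := by nlinarith [sq_abs ⟪b 0, p⟫, abs_nonneg ⟪b 0, p⟫]
  simp only [latLon, Matrix.cons_val_zero, Matrix.cons_val_one, hz,
    Complex.norm_mul_cos_arg, Complex.norm_mul_sin_arg, sin_arcsin (abs_le.1 h0).1 (abs_le.1 h0).2]
  conv_rhs => rw [← b.sum_repr' p, Fin.sum_univ_three]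
  simp only [z]
  abel

lemma exists_orthonormalBasis_apply_zero [FiniteDimensional ℝ E] (hE : Module.finrank ℝ E = 3)
    {u : E} (hu : ‖u‖ = 1) : ∃ b : OrthonormalBasis (Fin 3) ℝ E, b 0 = u := by
  have hv : Orthonormal ℝ (({0} : Set (Fin 3)).domRestrict fun _ => u) := by
    refine ⟨fun _ => hu, ?_⟩
    rintro ⟨i, rfl⟩ ⟨j, rfl⟩ hij
    exact absurd rfl hij
  obtain ⟨b, hb⟩ := hv.exists_orthonormalBasis_extension_of_card_eq (by simpa using hE)
  exact ⟨b, hb 0 rfl⟩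

lemma strip_inter_sphere_subset_image_latLon {b : OrthonormalBasis (Fin 3) ℝ E} {t : ℝ}
    (ht : 0 ≤ t) :
    {p | |⟪b 0, p⟫| ≤ t} ∩ Metric.sphere 0 1 ⊆
      latLon b '' Set.univ.pi ![Set.Icc (-π) π, Set.Icc (-(π / 2 * t)) (π / 2 * t)] := by
  rintro p ⟨hpt, hp⟩
  refine ⟨_, fun i _ => ?_, latLon_arg_arcsin (by simpa using hp)⟩
  have hs := (arcsin_le_arcsin (abs_le.1 hpt).2).trans (arcsin_le_pi_div_two_mul ht)
  have hs' := arcsin_le_arcsin (abs_le.1 hpt).1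
  rw [arcsin_neg] at hs'
  fin_cases i
  · exact ⟨(Complex.neg_pi_lt_arg _).le, Complex.arg_le_pi _⟩
  · refine ⟨?_, hs⟩
    show -(π / 2 * t) ≤ arcsin ⟪b 0, p⟫
    linarith [arcsin_le_pi_div_two_mul ht]

variable [MeasurableSpace E] [BorelSpace E]

lemma hausdorffMeasure_strip_inter_sphere_le [FiniteDimensional ℝ E]
    (hE : Module.finrank ℝ E = 3) {u : E} (hu : ‖u‖ = 1) {t : ℝ} (ht : 0 ≤ t) :
    μH[2] ({p | |⟪u, p⟫| ≤ t} ∩ Metric.sphere 0 1) ≤ ENNReal.ofReal (500 * t) := by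
  obtain ⟨b, rfl⟩ := exists_orthonormalBasis_apply_zero hE hu
  have hvol : (μH[2] : Measure (Fin 2 → ℝ)) = volume := by
    simpa using hausdorffMeasure_pi_real (ι := Fin 2)
  calc μH[2] ({p | |⟪b 0, p⟫| ≤ t} ∩ Metric.sphere 0 1)
      ≤ μH[2] (latLon b '' Set.univ.pi ![Set.Icc (-π) π, Set.Icc (-(π / 2 * t)) (π / 2 * t)]) :=
        measure_mono (strip_inter_sphere_subset_image_latLon ht)
    _ ≤ 5 ^ (2 : ℝ) * μH[2] (Set.univ.pi ![Set.Icc (-π) π, Set.Icc (-(π / 2 * t)) (π / 2 * t)]) :=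
        (lipschitzWith_latLon b).hausdorffMeasure_image_le zero_le_two _
    _ = ENNReal.ofReal (25 * (2 * π) * (π * t)) := by
        rw [hvol, volume_pi_pi, Fin.prod_univ_two]
        simp only [Matrix.cons_val_zero, Matrix.cons_val_one, Real.volume_Icc]
        rw [ENNReal.ofReal_mul (by positivity), ENNReal.ofReal_mul (by positivity), mul_assoc]
        congr 1
        · rw [ENNReal.rpow_two]; norm_num
        · congr 2 <;> ring
    _ ≤ ENNReal.ofReal (500 * t) := by
        have hπ : π ^ 2 ≤ 10 := by nlinarith [pi_lt_d2, pi_pos]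
        exact ENNReal.ofReal_le_ofReal (by nlinarith [mul_le_mul_of_nonneg_right hπ ht])

end LatitudeLongitude

lemma mem_sph_iff {p : V3} : p ∈ sph ↔ ‖p‖ = 1 := by simp [sph]

lemma measurableSet_sph : MeasurableSet sph := Metric.isClosed_sphere.measurableSet

lemma ae_mem_sph : ∀ᵐ p ∂μS, p ∈ sph := ae_restrict_mem measurableSet_sph

lemma inner_eq_sum (u p : V3) : ⟪u, p⟫ = ∑ i, u i * p i := by
  simp [PiLp.inner_apply, mul_comm]

lemma sum_sq_eq_one {p : V3} (hp : p ∈ sph) : ∑ i, p i ^ 2 = 1 := by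
  have h := real_inner_self_eq_norm_sq p
  rw [inner_eq_sum, mem_sph_iff.1 hp] at h
  simpa [sq] using h

lemma abs_apply_le_one {p : V3} (hp : p ∈ sph) (i : Fin 3) : |p i| ≤ 1 :=
  (PiLp.norm_apply_le p i).trans_eq (mem_sph_iff.1 hp)

lemma integrable_mul_apply_mul_apply {f : V3 → ℝ} (hf : Integrable f μS) (i j : Fin 3) :
    Integrable (fun p => f p * (p i * p j)) μS := by
  refine hf.mul_bdd (c := 1) (by fun_prop) ?_
  filter_upwards [ae_mem_sph] with p hp
  rw [Real.norm_eq_abs, abs_mul]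
  exact mul_le_one₀ (abs_apply_le_one hp i) (abs_nonneg _) (abs_apply_le_one hp j)

lemma integral_mul_apply_mul_apply {f : V3 → ℝ} (hf : IsProb f) (i j : Fin 3) :
    ∫ p, f p * (p i * p j) ∂μS = Qten f i j + if i = j then 1 / 3 else 0 := by
  have h : Qten f i j = ∫ p, f p * (p i * p j) - f p * (if i = j then 1 / 3 else 0) ∂μS := by
    simp only [Qten, Matrix.of_apply, mul_sub]
  rw [h, integral_sub (integrable_mul_apply_mul_apply hf.1 i j) (hf.1.mul_const _),
    integral_mul_const, hf.2.2]
  ring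

lemma integrable_mul_qf {f : V3 → ℝ} (hf : Integrable f μS) (A : Mat3) :
    Integrable (fun p => f p * qf A p) μS := by
  simp only [qf, Finset.mul_sum]
  refine integrable_finsetSum _ fun i _ => integrable_finsetSum _ fun j _ => ?_
  simpa only [mul_comm, mul_left_comm, mul_assoc] using
    (integrable_mul_apply_mul_apply hf i j).const_mul (A i j)

lemma integral_mul_qf {f : V3 → ℝ} (hf : IsProb f) (A : Mat3) :
    ∫ p, f p * qf A p ∂μS = ∑ i, ∑ j, A i j * Qten f i j + A.trace / 3 := by
  have hpt : ∀ p : V3, f p * qf A p = ∑ i, ∑ j, A i j * (f p * (p i * p j)) := fun p => by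
    simp only [qf, Finset.mul_sum]; congr! 2; ring
  have hint : ∀ i j, Integrable (fun p => A i j * (f p * (p i * p j))) μS := fun i j =>
    (integrable_mul_apply_mul_apply hf.1 i j).const_mul _
  rw [integral_congr_ae (Filter.Eventually.of_forall hpt),
    integral_finsetSum _ fun i _ => integrable_finsetSum _ fun j _ => hint i j]
  simp_rw [integral_finsetSum _ fun j _ => hint _ j, integral_const_mul,
    integral_mul_apply_mul_apply hf, mul_add, Finset.sum_add_distrib, Matrix.trace, Finset.sum_div]
  simp [div_eq_mul_inv]

lemma qf_of_mul_self (u q : V3) : qf (Matrix.of fun i j => u i * u j) q = ⟪u, q⟫ ^ 2 := by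
  simp only [qf, Matrix.of_apply, inner_eq_sum, sq, Finset.sum_mul_sum]
  congr! 2 with i _ j
  ring

lemma trace_of_mul_self {u : V3} (hu : u ∈ sph) : (Matrix.of fun i j => u i * u j).trace = 1 := by
  simpa [Matrix.trace, sq] using sum_sq_eq_one hu

lemma integral_mul_inner_sq {f : V3 → ℝ} (hf : IsProb f) {u : V3} (hu : u ∈ sph) :
    ∫ p, f p * ⟪u, p⟫ ^ 2 ∂μS = qf (Qten f) u + 1 / 3 := by
  simp_rw [← qf_of_mul_self, integral_mul_qf hf, trace_of_mul_self hu, qf, Matrix.of_apply]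
  congr! 3 with i _ j
  ring

lemma integrable_mul_inner_sq {f : V3 → ℝ} (hf : Integrable f μS) (u : V3) :
    Integrable (fun p => f p * ⟪u, p⟫ ^ 2) μS := by
  simpa only [qf_of_mul_self] using integrable_mul_qf hf (Matrix.of fun i j => u i * u j)

lemma Kf_eq_qf {f : V3 → ℝ} (hf : IsProb f) {p : V3} (hp : p ∈ sph) : Kf f p = qf (Qten f) p := by
  have h : ∀ q : V3, ((∑ i, p i * q i) ^ 2 - 1 / 3) * f q = f q * ⟪p, q⟫ ^ 2 - f q * (1 / 3) :=
    fun q => by rw [inner_eq_sum]; ring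
  simp only [Kf, h]
  rw [integral_sub (integrable_mul_inner_sq hf.1 p) (hf.1.mul_const _), integral_mul_const,
    integral_mul_inner_sq hf hp, hf.2.2]
  ring

lemma qf_Qten_le {f : V3 → ℝ} (hf : IsProb f) {u : V3} (hu : u ∈ sph) : qf (Qten f) u ≤ 2 / 3 := by
  have h : ∫ p, f p * ⟪u, p⟫ ^ 2 ∂μS ≤ ∫ p, f p ∂μS := by
    refine integral_mono_ae (integrable_mul_inner_sq hf.1 u) hf.1 ?_
    filter_upwards [hf.2.1, ae_mem_sph] with p hfp hp
    refine mul_le_of_le_one_right hfp ?_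
    have := abs_real_inner_le_norm u p
    rw [mem_sph_iff.1 hu, mem_sph_iff.1 hp, one_mul] at this
    nlinarith [abs_nonneg ⟪u, p⟫, sq_abs ⟪u, p⟫]
  rw [integral_mul_inner_sq hf hu, hf.2.2] at h
  linarith

lemma integrable_mul_Kf {f : V3 → ℝ} (hf : IsProb f) : Integrable (fun p => f p * Kf f p) μS :=
  (integrable_mul_qf hf.1 (Qten f)).congr <| by
    filter_upwards [ae_mem_sph] with p hp
    rw [Kf_eq_qf hf hp]

lemma integral_mul_Kf {f : V3 → ℝ} (hf : IsProb f) (hQ : Sym0 (Qten f)) :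
    ∫ p, f p * Kf f p ∂μS = mdot (Qten f) (Qten f) := by
  rw [integral_congr_ae (g := fun p => f p * qf (Qten f) p)
    (by filter_upwards [ae_mem_sph] with p hp; rw [Kf_eq_qf hf hp]), integral_mul_qf hf, hQ.2,
    mdot, Matrix.trace]
  simp [Matrix.mul_apply, hQ.1.apply]

lemma mdot_Qten_self_le {f : V3 → ℝ} (hf : IsProb f) (hQ : Sym0 (Qten f)) :
    mdot (Qten f) (Qten f) ≤ 2 / 3 := by
  rw [← integral_mul_Kf hf hQ]
  calc ∫ p, f p * Kf f p ∂μS ≤ ∫ p, f p * (2 / 3) ∂μS := by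
        refine integral_mono_ae (integrable_mul_Kf hf) (hf.1.mul_const _) ?_
        filter_upwards [hf.2.1, ae_mem_sph] with p hfp hp
        rw [Kf_eq_qf hf hp]
        exact mul_le_mul_of_nonneg_left (qf_Qten_le hf hp) hfp
    _ = 2 / 3 := by rw [integral_mul_const, hf.2.2, one_mul]

lemma μS_strip_le {u : V3} (hu : u ∈ sph) {t : ℝ} (ht : 0 ≤ t) :
    μS {p | |⟪u, p⟫| ≤ t} ≤ ENNReal.ofReal (500 * t) := by
  rw [μS, Measure.restrict_apply (measurableSet_le (by fun_prop) measurable_const)]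
  exact hausdorffMeasure_strip_inter_sphere_le (by simp) (mem_sph_iff.1 hu) ht

lemma single_mem_sph (i : Fin 3) : EuclideanSpace.single i 1 ∈ sph := by simp [sph]

instance : Nonempty sph := ⟨⟨_, single_mem_sph 0⟩⟩

instance : IsFiniteMeasure μS := by
  have hu := mem_sph_iff.1 (single_mem_sph 0)
  refine ⟨lt_of_le_of_lt ?_ (ENNReal.ofReal_lt_top (r := 500 * 1))⟩
  rw [μS, Measure.restrict_apply_univ]
  refine (measure_mono fun p (hp : p ∈ sph) => (⟨?_, hp⟩ : p ∈ {p | |⟪_, p⟫| ≤ 1} ∩ sph)).trans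
    (hausdorffMeasure_strip_inter_sphere_le (by simp) hu zero_le_one)
  simpa [mem_sph_iff.1 hp, hu] using abs_real_inner_le_norm (EuclideanSpace.single 0 1 : V3) p

lemma μS_real_strip_le {u : V3} (hu : u ∈ sph) {t : ℝ} (ht : 0 ≤ t) :
    μS.real {p | |⟪u, p⟫| ≤ t} ≤ 500 * t :=
  ENNReal.toReal_le_of_le_ofReal (by positivity) (μS_strip_le hu ht)

lemma le_integral_mul_log_of_vmin_lt {f : V3 → ℝ} (hf : IsProb f)
    (hflog : Integrable (fun p => f p * log (f p)) μS) {t : ℝ} (ht0 : 0 < t) (ht : t ≤ 1 / 500)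
    (hv : vmin (Qten f) < -(1 / 3) + t ^ 3) :
    -log (500 * t) / 2 - 1 / 2 - μS.real Set.univ ≤ ∫ p, f p * log (f p) ∂μS := by
  obtain ⟨⟨u, hu⟩, hqf⟩ := exists_lt_of_ciInf_lt hv
  have hmom : ∫ p, f p * ⟪u, p⟫ ^ 2 ∂μS ≤ t ^ 3 := by
    rw [integral_mul_inner_sq hf hu]
    exact (add_lt_of_lt_sub_right (by linarith [hqf])).le
  have hcheb := sq_mul_setIntegral_compl_le (g := fun p => ⟪u, p⟫) (by fun_prop) hf.2.1 hf.1
    (integrable_mul_inner_sq hf.1 u) ht0.le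
  refine neg_log_div_two_sub_le_integral_mul_log hf.2.1 hf.1 hflog hf.2.2
    (measurableSet_le (by fun_prop) measurable_const) ?_ (μS_real_strip_le hu ht0.le)
    (by linarith)
  have : t ^ 2 * ∫ p in {p | |⟪u, p⟫| ≤ t}ᶜ, f p ∂μS ≤ t ^ 2 * t := by nlinarith
  have := le_of_mul_le_mul_left this (by positivity)
  linarith

section FreeEnergy

variable {f : V3 → ℝ}

lemma integrable_mul_Kf_sub (hf : IsProb f) (η : ℝ) :
    Integrable (fun p => f p * (Kf f p - η)) μS :=
  ((integrable_mul_Kf hf).sub (hf.1.mul_const η)).congr (.of_forall fun p => by simp [mul_sub])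

lemma integral_mul_Kf_sub (hf : IsProb f) (hQ : Sym0 (Qten f)) (η : ℝ) :
    ∫ p, f p * (Kf f p - η) ∂μS = mdot (Qten f) (Qten f) - η := by
  simp_rw [mul_sub]
  rw [integral_sub (integrable_mul_Kf hf) (hf.1.mul_const η), integral_mul_Kf hf hQ,
    integral_mul_const, hf.2.2, one_mul]

lemma mdot_Qten_self_sub_pos {η : ℝ} (hf : IsProb f) (hQ : Sym0 (Qten f))
    (hpos : ∀ᵐ p ∂μS, f p ≠ 0 → η < Kf f p) : 0 < mdot (Qten f) (Qten f) - η := by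
  have hnonneg : 0 ≤ᵐ[μS] fun p => f p * (Kf f p - η) := by
    filter_upwards [hf.2.1, hpos] with p hfp hp
    rcases eq_or_ne (f p) 0 with h | h
    · simp [h]
    · exact mul_nonneg hfp (sub_nonneg.2 (hp h).le)
  have hsupp : 0 < μS (Function.support f) :=
    (integral_pos_iff_support_of_nonneg_ae hf.2.1 hf.1).1 (by rw [hf.2.2]; exact one_pos)
  rw [← integral_mul_Kf_sub hf hQ]
  refine (integral_pos_iff_support_of_nonneg_ae hnonneg (integrable_mul_Kf_sub hf η)).2 <|
    hsupp.trans_le <| measure_mono_ae ?_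
  filter_upwards [hpos] with p hp hfp
  exact mul_ne_zero hfp (sub_ne_zero.2 (hp hfp).ne')

lemma entropy_le_freeEnergy_add_log {η : ℝ} (hf : IsProb f) (hQ : Sym0 (Qten f))
    (hpos : ∀ᵐ p ∂μS, f p ≠ 0 → η < Kf f p)
    (hint : Integrable (fun p => f p * log (f p) - f p * log (Kf f p - η)) μS) :
    Integrable (fun p => f p * log (f p)) μS ∧
      ∫ p, f p * log (f p) ∂μS ≤ ∫ p, f p * log (f p) - f p * log (Kf f p - η) ∂μS
        + log (mdot (Qten f) (Qten f) - η) := by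
  set c := mdot (Qten f) (Qten f) - η
  have hc : 0 < c := mdot_Qten_self_sub_pos hf hQ hpos
  set H : V3 → ℝ := fun p => f p * (Kf f p - η) / c + f p * (log c - 1)
  have hH : Integrable H μS := ((integrable_mul_Kf_sub hf η).div_const c).add (hf.1.mul_const _)
  have hHint : ∫ p, H p ∂μS = log c := by
    rw [integral_add ((integrable_mul_Kf_sub hf η).div_const c) (hf.1.mul_const _), integral_div,
      integral_mul_Kf_sub hf hQ, integral_mul_const, hf.2.2, div_self hc.ne']
    ring
  have hle : ∀ᵐ p ∂μS, f p * log (f p) ≤ (f p * log (f p) - f p * log (Kf f p - η)) + H p := by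
    filter_upwards [hf.2.1, hpos] with p hfp hp
    rcases eq_or_ne (f p) 0 with h | h
    · simp [H, h]
    · linarith [mul_log_le_mul_div_add hfp (sub_pos.2 (hp h)) hc]
  have hflog : Integrable (fun p => f p * log (f p)) μS :=
    integrable_of_le_of_le (hf.1.aemeasurable.mul
      (measurable_log.comp_aemeasurable hf.1.aemeasurable)).aestronglyMeasurable
      (by filter_upwards [hf.2.1] with p hp using self_sub_one_le_mul_log hp) hle
      (hf.1.sub (integrable_const 1)) (hint.add hH)
  refine ⟨hflog, ?_⟩
  have := integral_mono_ae (g := fun p => (f p * log (f p) - f p * log (Kf f p - η)) + H p)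
    hflog (hint.add hH) hle
  rwa [integral_add hint hH, hHint] at this

end FreeEnergy

lemma psiS_sub_log_le_FE {f : V3 → ℝ} (hf : IsProb f) (hQ : Sym0 (Qten f)) (η : ℝ) :
    psiS (Qten f) - ((log (mdot (Qten f) (Qten f) - η) : ℝ) : EReal) ≤ FE f η := by
  unfold FE
  split_ifs with hfin
  · obtain ⟨hflog, hle⟩ := entropy_le_freeEnergy_add_log hf hQ hfin.1 hfin.2
    have hψ : psiS (Qten f) ≤ ((∫ p, f p * log (f p) ∂μS : ℝ) : EReal) :=
      sInf_le ⟨f, hf, rfl, if_pos hflog⟩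
    refine (EReal.sub_le_sub hψ le_rfl).trans ?_
    rw [← EReal.coe_sub, EReal.coe_le_coe_iff]
    linarith
  · exact le_top

lemma le_Jfun {Q : Mat3} {η b : ℝ}
    (h : ∀ f, IsProb f → Qten f = Q → (∀ᵐ p ∂μS, f p ≠ 0 → η < Kf f p) →
      Integrable (fun p => f p * log (f p) - f p * log (Kf f p - η)) μS →
      b ≤ ∫ p, f p * log (f p) - f p * log (Kf f p - η) ∂μS) :
    (b : EReal) ≤ Jfun Q η := by
  refine le_sInf ?_
  rintro _ ⟨f, hf, hQf, rfl⟩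
  unfold FE
  split_ifs with hfin
  · exact EReal.coe_le_coe_iff.2 (h f hf hQf hfin.1 hfin.2)
  · exact le_top

lemma freeEnergy_ge_of_near_boundary {f : V3 → ℝ} {η : ℝ} (hf : IsProb f) (hQ : Sym0 (Qten f))
    (hpos : ∀ᵐ p ∂μS, f p ≠ 0 → η < Kf f p)
    (hint : Integrable (fun p => f p * log (f p) - f p * log (Kf f p - η)) μS)
    {t : ℝ} (ht0 : 0 < t) (ht : t ≤ 1 / 500)
    (hnear : vmin (Qten f) < -(1 / 3) + t ^ 3 ∨ mdot (Qten f) (Qten f) < η + t ^ 3) :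
    -log (500 * t) / 2 - 1 / 2 - μS.real Set.univ - |η| ≤
      ∫ p, f p * log (f p) - f p * log (Kf f p - η) ∂μS := by
  obtain ⟨hflog, hle⟩ := entropy_le_freeEnergy_add_log hf hQ hpos hint
  have hc := mdot_Qten_self_sub_pos hf hQ hpos
  have hlogt : log t ≤ 0 := log_nonpos ht0.le (by linarith)
  have hlog500 : log (500 * t) = log 500 + log t := log_mul (by norm_num) ht0.ne'
  have hlog500_pos : 0 < log 500 := log_pos (by norm_num)
  rcases hnear with hv | hm
  · have hent := le_integral_mul_log_of_vmin_lt hf hflog ht0 ht hv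
    have hlogc := log_le_sub_one_of_pos hc
    linarith [mdot_Qten_self_le hf hQ, neg_abs_le η]
  · have hent := integral_sub_measureReal_le_integral_mul_log hf.2.1 hf.1 hflog
    have hlogc : log (mdot (Qten f) (Qten f) - η) ≤ 3 * log t := by
      rw [show 3 * log t = log (t ^ 3) by rw [log_pow]; norm_num]
      exact log_le_log hc (by linarith)
    rw [hf.2.2] at hent
    linarith [abs_nonneg η]

theorem stmt_9_general (η : ℝ) (Q : Mat3) (hQ : Sym0 Q) :
    (psiS Q - ((Real.log (mdot Q Q - η) : ℝ) : EReal) ≤ Jfun Q η) ∧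
    (∀ M : ℝ, ∃ δ : ℝ, 0 < δ ∧ ∀ Q' : Mat3,
      Sym0 Q' → -(1/3) < vmin Q' → η < mdot Q' Q' →
      (vmin Q' < -(1/3) + δ ∨ mdot Q' Q' < η + δ) →
      (M : EReal) < Jfun Q' η) := by
  refine ⟨le_sInf ?_, fun M => ?_⟩
  · rintro _ ⟨f, hf, rfl, rfl⟩
    exact psiS_sub_log_le_FE hf hQ η
  · set t := exp (-2 * (|M| + 1 + μS.real Set.univ + |η|)) / 500
    have ht0 : 0 < t := by positivity
    have ht : t ≤ 1 / 500 := by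
      refine div_le_div_of_nonneg_right (exp_le_one_iff.2 ?_) (by norm_num)
      linarith [abs_nonneg M, abs_nonneg η, (measureReal_nonneg : 0 ≤ μS.real Set.univ)]
    have hbound : -log (500 * t) / 2 - 1 / 2 - μS.real Set.univ - |η| = |M| + 1 / 2 := by
      rw [mul_div_cancel₀ _ (by norm_num), log_exp]
      ring
    refine ⟨t ^ 3, by positivity, fun Q' hQ' _ _ hnear => ?_⟩
    calc (M : EReal) < ((|M| + 1 / 2 : ℝ) : EReal) :=
          EReal.coe_lt_coe_iff.2 (by linarith [le_abs_self M])
      _ ≤ Jfun Q' η := by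
        rw [← hbound]
        refine le_Jfun fun f hf hQf hpos hint => ?_
        subst hQf
        exact freeEnergy_ge_of_near_boundary hf hQ' hpos hint ht0 ht hnear

/-- `J(Q,η) ≥ ψ_s(Q) − ln(|Q|² − η)` whenever `J(Q,η) < +∞`; in
particular `J(·,η)` blows up to `+∞` uniformly at the boundary of its domain
`{Q ∈ Sym₀(3) : v_min(Q) > −1/3, |Q|² > η}`. -/
theorem stmt_9 (η : ℝ) (Q : Mat3) (hQ : Sym0 Q) (hfin : Jfun Q η < ⊤) :
    (psiS Q - ((Real.log (mdot Q Q - η) : ℝ) : EReal) ≤ Jfun Q η) ∧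
    (∀ M : ℝ, ∃ δ : ℝ, 0 < δ ∧ ∀ Q' : Mat3,
      Sym0 Q' → -(1/3) < vmin Q' → η < mdot Q' Q' →
      (vmin Q' < -(1/3) + δ ∨ mdot Q' Q' < η + δ) →
      (M : EReal) < Jfun Q' η) :=
  stmt_9_general η Q hQ
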